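/- For two agents, the cut-and-choose style algorithm returns an EFM allocation: start from an EF1 allocation (M_1, M_2) of the indivisible goods with u_1(M_1) ≥ u_1(M_2); if u_1(M_1) ≤ u_1(M_2 ∪ C), agent 1 splits the cake into (C_1, C_2) so that u_1(M_1 ∪ C_1) = u_1(M_2 ∪ C_2), otherwise all cake goes to M_2; then agent 2 takes her preferred bundle and agent 1 takes the other. The resulting allocation is EFM. -/
import Mathlib


/-- Utility for a mixed bundle: additive value over goods plus cake value. -/
def util {G : Type*} (v : Fin 2 → G → ℝ) (w : Fin 2 → Set ℝ → ℝ) (i : Fin 2)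
    (X : Finset G) (D : Set ℝ) : ℝ :=
  (∑ g ∈ X, v i g) + w i D

/-- EFM for two agents where agent `0` holds `(X0, D0)` and agent `1` holds `(X1, D1)`. -/
def EFM2 {G : Type*} [DecidableEq G] (v : Fin 2 → G → ℝ) (w : Fin 2 → Set ℝ → ℝ)
    (X0 : Finset G) (D0 : Set ℝ) (X1 : Finset G) (D1 : Set ℝ) : Prop :=
  ((D1 = ∅ → (X1 = ∅ ∨ ∃ g ∈ X1, util v w 0 X0 D0 ≥ util v w 0 (X1.erase g) D1)) ∧
    (D1 ≠ ∅ → util v w 0 X0 D0 ≥ util v w 0 X1 D1)) ∧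
  ((D0 = ∅ → (X0 = ∅ ∨ ∃ g ∈ X0, util v w 1 X1 D1 ≥ util v w 1 (X0.erase g) D0)) ∧
    (D0 ≠ ∅ → util v w 1 X1 D1 ≥ util v w 1 X0 D0))

/-- If agent `i` weakly prefers her own bundle, both EFM conditions toward the
other bundle hold. -/
lemma half {G : Type*} [DecidableEq G]
    (v : Fin 2 → G → ℝ) (hv : ∀ i g, 0 ≤ v i g) (w : Fin 2 → Set ℝ → ℝ)
    (i : Fin 2) (A : Finset G) (B : Set ℝ) (X : Finset G) (D : Set ℝ)
    (h : util v w i A B ≥ util v w i X D) :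
    (D = ∅ → (X = ∅ ∨ ∃ g ∈ X, util v w i A B ≥ util v w i (X.erase g) D)) ∧
    (D ≠ ∅ → util v w i A B ≥ util v w i X D) := by
  refine ⟨fun _ => ?_, fun _ => h⟩
  rcases X.eq_empty_or_nonempty with hX | ⟨g, hg⟩
  · exact Or.inl hX
  · refine Or.inr ⟨g, hg, le_trans ?_ h⟩
    unfold util
    have := Finset.sum_le_sum_of_subset_of_nonneg (X.erase_subset g)
      (fun x _ _ => hv i x)
    linarith

/-- The two-agent cut-and-choose algorithm returns an EFM allocation. -/
theorem two_agent_cut_and_choose_EFM {G : Type*} [DecidableEq G]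
    (v : Fin 2 → G → ℝ) (hv : ∀ i g, 0 ≤ v i g)
    (w : Fin 2 → Set ℝ → ℝ)
    (hw0 : ∀ i, w i ∅ = 0)
    (hadd : ∀ i X Y, Disjoint X Y → w i (X ∪ Y) = w i X + w i Y)
    (hwnn : ∀ i X, 0 ≤ w i X)
    (M1 M2 : Finset G) (hM : Disjoint M1 M2)
    -- (M1, M2) is an EF1 partition of the indivisible goods (for both agents,
    -- toward both bundles)
    (hEF1 : ∀ i : Fin 2,
      (M2 = ∅ ∨ ∃ g ∈ M2, ∑ x ∈ M1, v i x ≥ ∑ x ∈ M2.erase g, v i x) ∧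
      (M1 = ∅ ∨ ∃ g ∈ M1, ∑ x ∈ M2, v i x ≥ ∑ x ∈ M1.erase g, v i x))
    -- w.l.o.g. u_1(M_1) ≥ u_1(M_2)
    (hgeq : ∑ x ∈ M1, v 0 x ≥ ∑ x ∈ M2, v 0 x)
    (C C1 C2 : Set ℝ) (hCu : C1 ∪ C2 = C) (hCd : Disjoint C1 C2)
    -- agent 1 cuts the cake to equalize the bundles if possible,
    -- otherwise all cake goes with M2
    (hcut1 : (∑ x ∈ M1, v 0 x) ≤ util v w 0 M2 C →
      util v w 0 M1 C1 = util v w 0 M2 C2)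
    (hcut2 : (∑ x ∈ M1, v 0 x) > util v w 0 M2 C → C1 = ∅ ∧ C2 = C) :
    -- agent 2 takes her preferred bundle; agent 1 takes the other one
    (util v w 1 M2 C2 ≥ util v w 1 M1 C1 → EFM2 v w M1 C1 M2 C2) ∧
    (util v w 1 M1 C1 ≥ util v w 1 M2 C2 → EFM2 v w M2 C2 M1 C1) := by
  -- agent 0's conditions toward the other bundle, in both orientations
  have h0a : (C2 = ∅ → (M2 = ∅ ∨ ∃ g ∈ M2,
        util v w 0 M1 C1 ≥ util v w 0 (M2.erase g) C2)) ∧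
      (C2 ≠ ∅ → util v w 0 M1 C1 ≥ util v w 0 M2 C2) := by
    rcases le_or_gt (∑ x ∈ M1, v 0 x) (util v w 0 M2 C) with hle | hlt
    · exact half v hv w 0 M1 C1 M2 C2 (le_of_eq (hcut1 hle).symm)
    · obtain ⟨he1, he2⟩ := hcut2 hlt
      refine half v hv w 0 M1 C1 M2 C2 ?_
      unfold util at hlt ⊢
      rw [he1, he2, hw0]
      linarith
  have h0b : (C1 = ∅ → (M1 = ∅ ∨ ∃ g ∈ M1,
        util v w 0 M2 C2 ≥ util v w 0 (M1.erase g) C1)) ∧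
      (C1 ≠ ∅ → util v w 0 M2 C2 ≥ util v w 0 M1 C1) := by
    rcases le_or_gt (∑ x ∈ M1, v 0 x) (util v w 0 M2 C) with hle | hlt
    · exact half v hv w 0 M2 C2 M1 C1 (le_of_eq (hcut1 hle))
    · obtain ⟨he1, he2⟩ := hcut2 hlt
      constructor
      · intro _
        rcases (hEF1 0).2 with h | ⟨g, hg, hge⟩
        · exact Or.inl h
        · refine Or.inr ⟨g, hg, ?_⟩
          unfold util
          rw [he1, hw0]
          have := hwnn 0 C2
          linarith
      · intro hne
        exact absurd he1 hne
  constructor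
  · intro h2
    exact ⟨h0a, half v hv w 1 M2 C2 M1 C1 h2⟩
  · intro h2
    exact ⟨h0b, half v hv w 1 M1 C1 M2 C2 h2⟩
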